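/- Under the bijection φ: S_n(132) → A_{2n+1}(132) (even-indexed entries of φ(w) order-isomorphic to w), a permutation w ∈ S_n(132) has longest increasing subsequence of length exactly k if and only if φ(w) has longest increasing subsequence of length exactly k+1. -/

import Mathlib

open Equiv

/-- The word `w` contains the pattern `p`: some subsequence of `w` is
order-isomorphic to `p`. -/
def Contains {α β : Type*} [LT α] [LT β] {n k : ℕ} (w : Fin n → α) (p : Fin k → β) : Prop :=
  ∃ f : Fin k → Fin n, StrictMono f ∧ ∀ i j : Fin k, p i < p j ↔ w (f i) < w (f j)

/-- The pattern 132 (written with 0-indexed values as (0,2,1)). -/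
def pat132 : Fin 3 → ℕ := ![0, 2, 1]

/-- `w` avoids the pattern 132. -/
def Avoids132 {n : ℕ} (w : Equiv.Perm (Fin n)) : Prop :=
  ¬ Contains (fun i => w i) pat132

/-- Pattern containment between permutations. -/
def ContainsP {n k : ℕ} (w : Equiv.Perm (Fin n)) (p : Equiv.Perm (Fin k)) : Prop :=
  Contains (fun i => w i) (fun i => p i)

/-- `w` is (up-down) alternating: `w 0 < w 1 > w 2 < w 3 > ⋯` (0-indexed). -/
def Alternating {m : ℕ} (w : Equiv.Perm (Fin m)) : Prop :=
  ∀ i : ℕ, ∀ h : i + 1 < m,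
    (i % 2 = 0 → w ⟨i, by omega⟩ < w ⟨i + 1, h⟩) ∧
    (i % 2 = 1 → w ⟨i + 1, h⟩ < w ⟨i, by omega⟩)

/-- The even-indexed (in 1-indexed terms: `w₂, w₄, …, w₂ₙ`) entries of `w`
are order-isomorphic to `u`. -/
def OrderIsoEven {n : ℕ} (w : Equiv.Perm (Fin (2 * n + 1))) (u : Equiv.Perm (Fin n)) : Prop :=
  ∀ i j : Fin n, u i < u j ↔
    w ⟨2 * (i : ℕ) + 1, by have := i.isLt; omega⟩ < w ⟨2 * (j : ℕ) + 1, by have := j.isLt; omega⟩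


open Equiv

/-!
In an alternating permutation every entry at an even (0-indexed) position is a descent bottom
`σ (q - 1) > σ q`, so if `σ` also avoids 132, no entry at an even position `q` can be preceded by
a smaller entry: `σ p < σ q < σ (q - 1)` with `p < q - 1` would be a 132. Hence an increasing
subsequence of `φ(w)` uses only odd positions after its first entry, and those entries form an
increasing subsequence of `w`. Conversely, an increasing subsequence of `w`, read at the odd
positions of `φ(w)`, can be extended by the valley just before its first entry.
-/

/-- The 0-indexed positions `2 i + 1`, i.e. the paper's even positions `2, 4, …, 2n` of `φ(w)`. -/
def oddPos (n : ℕ) : Fin n ↪o Fin (2 * n + 1) :=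
  OrderEmbedding.ofStrictMono (fun i => ⟨2 * i + 1, by omega⟩)
    fun i j h => by simp only [Fin.mk_lt_mk]; exact Nat.add_lt_add_right (by omega) 1

@[simp]
lemma coe_oddPos {n : ℕ} (i : Fin n) : (oddPos n i : ℕ) = 2 * i + 1 := rfl

lemma exists_oddPos_eq {n : ℕ} {x : Fin (2 * n + 1)} (hx : (x : ℕ) % 2 = 1) :
    ∃ i, oddPos n i = x :=
  ⟨⟨x / 2, by omega⟩, Fin.ext (by simp only [coe_oddPos]; omega)⟩

lemma containsP_one_iff {n k : ℕ} (w : Perm (Fin n)) :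
    ContainsP w (1 : Perm (Fin k)) ↔ ∃ f : Fin k → Fin n, StrictMono f ∧ StrictMono (w ∘ f) := by
  simp only [ContainsP, Contains, Perm.coe_one, id_eq]
  refine exists_congr fun f => and_congr_right fun _ => ⟨fun h i j => (h i j).1, fun h i j => ?_⟩
  exact h.lt_iff_lt.symm

lemma contains_pat132 {α : Type*} [Preorder α] {n : ℕ} (v : Fin n → α) {a b c : Fin n}
    (hab : a < b) (hbc : b < c) (hac : v a < v c) (hcb : v c < v b) : Contains v pat132 := by
  refine ⟨![a, b, c], by simp [hab, hbc], ?_⟩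
  intro i j
  fin_cases i <;> fin_cases j <;>
    simp [pat132, hac, hcb, hac.trans hcb, hcb.not_gt, (hac.trans hcb).not_gt, hac.not_gt]

lemma Alternating.valley_lt_peak {n : ℕ} {σ : Perm (Fin (2 * n + 1))} (halt : Alternating σ)
    (i : Fin n) : σ ⟨2 * i, by omega⟩ < σ (oddPos n i) :=
  (halt (2 * i) (by omega)).1 (by omega)

lemma Alternating.odd_of_lt_of_lt {m : ℕ} {σ : Perm (Fin m)} (halt : Alternating σ)
    (havoid : Avoids132 σ) {p q : Fin m} (hpq : p < q) (hσ : σ p < σ q) : (q : ℕ) % 2 = 1 := by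
  by_contra heven
  have hq : 2 ≤ (q : ℕ) := by rw [Fin.lt_def] at hpq; omega
  let r : Fin m := ⟨q - 1, by omega⟩
  have hdescent : σ q < σ r := by
    have h := (halt (q - 1) (by omega)).2 (by omega)
    rwa [show (⟨q - 1 + 1, _⟩ : Fin m) = q from Fin.ext (by simp only; omega)] at h
  obtain hpr | hpr : p < r ∨ p = r := by
    rw [Fin.lt_def] at hpq ⊢; rw [Fin.ext_iff]; simp only [r]; omega
  · exact havoid (contains_pat132 _ hpr (by rw [Fin.lt_def]; simp only [r]; omega) hσ hdescent)
  · exact lt_asymm hσ (hpr ▸ hdescent)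

lemma OrderIsoEven.strictMono_comp_iff {n m : ℕ} {φw : Perm (Fin (2 * n + 1))}
    {w : Perm (Fin n)} (hiso : OrderIsoEven φw w) {f : Fin m → Fin n} :
    StrictMono (φw ∘ oddPos n ∘ f) ↔ StrictMono (w ∘ f) :=
  ⟨fun h _ _ hij => (hiso _ _).2 (h hij), fun h _ _ hij => (hiso _ _).1 (h hij)⟩

section

variable {n k : ℕ} {w : Perm (Fin n)} {φw : Perm (Fin (2 * n + 1))}

lemma containsP_one_succ_of_containsP_one (halt : Alternating φw) (hiso : OrderIsoEven φw w)
    (h : ContainsP w (1 : Perm (Fin k))) : ContainsP φw (1 : Perm (Fin (k + 1))) := by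
  rw [containsP_one_iff] at h ⊢
  obtain ⟨f, hf, hwf⟩ := h
  cases k with
  | zero => exact ⟨fun _ => 0, Subsingleton.strictMono (α := Fin 1) _,
    Subsingleton.strictMono (α := Fin 1) _⟩
  | succ k =>
    have hpeaks : StrictMono (φw ∘ oddPos n ∘ f) := hiso.strictMono_comp_iff.mpr hwf
    refine ⟨Fin.cons ⟨2 * f 0, by omega⟩ (oddPos n ∘ f), ?_, ?_⟩
    · refine Fin.strictMono_cons.mpr ⟨fun j => ?_, (oddPos n).strictMono.comp hf⟩
      have : f 0 ≤ f j := hf.monotone (Fin.zero_le j)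
      rw [Fin.le_def] at this
      simp only [Function.comp_apply, Fin.lt_def, coe_oddPos]
      omega
    · rw [Fin.comp_cons, Fin.strictMono_cons]
      exact ⟨fun j => (halt.valley_lt_peak (f 0)).trans_le (hpeaks.monotone (Fin.zero_le j)),
        hpeaks⟩

lemma containsP_one_of_containsP_one_succ (halt : Alternating φw) (havoid : Avoids132 φw)
    (hiso : OrderIsoEven φw w) (h : ContainsP φw (1 : Perm (Fin (k + 1)))) :
    ContainsP w (1 : Perm (Fin k)) := by
  rw [containsP_one_iff] at h ⊢
  obtain ⟨g, hg, hφg⟩ := h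
  have hodd (i : Fin k) : (g i.succ : ℕ) % 2 = 1 :=
    halt.odd_of_lt_of_lt havoid (hg i.succ_pos) (hφg i.succ_pos)
  choose f hf using fun i => exists_oddPos_eq (hodd i)
  have hgf : g ∘ Fin.succ = oddPos n ∘ f := (funext hf).symm
  have hmono : StrictMono (oddPos n ∘ f) := hgf ▸ hg.comp Fin.strictMono_succ
  refine ⟨f, fun i j hij => (oddPos n).lt_iff_lt.mp (hmono hij), hiso.strictMono_comp_iff.mp ?_⟩
  rw [← hgf]
  exact hφg.comp Fin.strictMono_succ

end

theorem stmt15_general (n k : ℕ) (w : Equiv.Perm (Fin n))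
    (φw : Equiv.Perm (Fin (2 * n + 1)))
    (hφ : Alternating φw ∧ Avoids132 φw ∧ OrderIsoEven φw w) :
    (ContainsP w (1 : Equiv.Perm (Fin k)) ∧
        ¬ ContainsP w (1 : Equiv.Perm (Fin (k + 1)))) ↔
      (ContainsP φw (1 : Equiv.Perm (Fin (k + 1))) ∧
        ¬ ContainsP φw (1 : Equiv.Perm (Fin (k + 2)))) := by
  obtain ⟨halt, havoid, hiso⟩ := hφ
  have shift (j : ℕ) : ContainsP w (1 : Perm (Fin j)) ↔ ContainsP φw (1 : Perm (Fin (j + 1))) :=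
    ⟨containsP_one_succ_of_containsP_one halt hiso,
      containsP_one_of_containsP_one_succ halt havoid hiso⟩
  exact and_congr (shift k) (not_congr (shift (k + 1)))

/-- `w ∈ S_n(132)` has longest increasing subsequence of length
exactly `k` iff `φ(w)` has longest increasing subsequence of length exactly
`k+1`. -/
theorem stmt15 (n k : ℕ) (w : Equiv.Perm (Fin n)) (hw : Avoids132 w)
    (φw : Equiv.Perm (Fin (2 * n + 1)))
    (hφ : Alternating φw ∧ Avoids132 φw ∧ OrderIsoEven φw w) :
    (ContainsP w (1 : Equiv.Perm (Fin k)) ∧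
        ¬ ContainsP w (1 : Equiv.Perm (Fin (k + 1)))) ↔
      (ContainsP φw (1 : Equiv.Perm (Fin (k + 1))) ∧
        ¬ ContainsP φw (1 : Equiv.Perm (Fin (k + 2)))) :=
  stmt15_general n k w φw hφ
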